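/- For the standard normal distribution, the integral J = ∫∫∫_{y < x < z} (x−y)(z−x) φ(z) φ(y) φ(x) dz dy dx equals √3/(2π) − 1/6. -/

import Mathlib

/-!
Integrating out `z` and then `y` with `φ' = -x φ` and `Φ' = φ` gives
`∫_{z > x} (z - x) φ(z) dz = φ(x) - x (1 - Φ(x))` and
`∫_{y < x} (x - y) φ(y) dy = x Φ(x) + φ(x)`, so
`J = ∫ φ(x) (x Φ(x) + φ(x)) (φ(x) - x (1 - Φ(x))) dx`. Integrating by parts, this integrand
is `3 φ³` plus the derivative of a polynomial in `φ`, `x φ` and `Φ`; the polynomial vanishes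
at `-∞` and tends to `1/3 - 1/2 = -1/6` at `+∞`. Finally `φ³` is a Gaussian with
`∫ φ³ = (2π)^(-3/2) √(2π/3) = √3 / (6π)`.
-/

open MeasureTheory

noncomputable def phi (x : ℝ) : ℝ := (1 / Real.sqrt (2 * Real.pi)) * Real.exp (-x ^ 2 / 2)

open Real Filter Set Topology ProbabilityTheory

theorem integrable_pow_mul_exp_neg_mul_sq {b : ℝ} (hb : 0 < b) (n : ℕ) :
    Integrable fun x : ℝ => x ^ n * exp (-b * x ^ 2) := by
  simpa using
    integrable_rpow_mul_exp_neg_mul_sq hb (s := n) (neg_one_lt_zero.trans_le n.cast_nonneg)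

theorem tendsto_pow_mul_exp_neg_mul_sq_cocompact {b : ℝ} (hb : 0 < b) (n : ℕ) :
    Tendsto (fun x : ℝ => x ^ n * exp (-b * x ^ 2)) (cocompact ℝ) (𝓝 0) := by
  rw [tendsto_zero_iff_norm_tendsto_zero]
  simpa [abs_mul, abs_pow] using tendsto_rpow_abs_mul_exp_neg_mul_sq_cocompact hb n

theorem hasDerivAt_integral_Iic {f : ℝ → ℝ} (hf : Continuous f) (hfi : Integrable f)
    (x : ℝ) :
    HasDerivAt (fun x => ∫ t in Iic x, f t) (f x) x := by
  have h : (fun x => ∫ t in Iic x, f t) =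
      fun x => (∫ t in Iic 0, f t) + ∫ t in (0 : ℝ)..x, f t := by
    ext x
    rw [← intervalIntegral.integral_Iic_sub_Iic hfi.integrableOn hfi.integrableOn]
    ring
  rw [h]
  exact (intervalIntegral.integral_hasDerivAt_right hfi.intervalIntegrable
    hf.aestronglyMeasurable.stronglyMeasurableAtFilter hf.continuousAt).const_add _

theorem phi_eq_gaussianPDFReal : phi = gaussianPDFReal 0 1 := by
  ext x
  simp [phi, gaussianPDFReal]

theorem phi_eq_mul_exp (x : ℝ) : phi x = (√(2 * π))⁻¹ * exp (-(1 / 2) * x ^ 2) := by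
  rw [phi]
  ring_nf

theorem phi_nonneg (x : ℝ) : 0 ≤ phi x := by
  rw [phi_eq_gaussianPDFReal]
  exact gaussianPDFReal_nonneg 0 1 x

theorem phi_le_one (x : ℝ) : phi x ≤ 1 := by
  rw [phi_eq_mul_exp]
  have hc : (√(2 * π))⁻¹ ≤ 1 :=
    inv_le_one_of_one_le₀ (one_le_sqrt.mpr (by linarith [pi_gt_three]))
  have he : exp (-(1 / 2) * x ^ 2) ≤ 1 := exp_le_one_iff.mpr (by nlinarith [sq_nonneg x])
  exact mul_le_one₀ hc (by positivity) he

@[fun_prop]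
theorem continuous_phi : Continuous phi := by
  unfold phi
  fun_prop

theorem hasDerivAt_phi (x : ℝ) : HasDerivAt phi (-x * phi x) x := by
  rw [funext phi_eq_mul_exp]
  exact (((hasDerivAt_pow 2 x).const_mul _).exp.const_mul _).congr_deriv (by ring)

theorem integrable_pow_mul_phi (n : ℕ) : Integrable fun x => x ^ n * phi x := by
  simp_rw [phi_eq_mul_exp, mul_left_comm _ (√(2 * π))⁻¹]
  exact (integrable_pow_mul_exp_neg_mul_sq one_half_pos n).const_mul _

theorem integrable_phi : Integrable phi := by
  simpa using integrable_pow_mul_phi 0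

theorem integrable_sub_mul_phi (a : ℝ) : Integrable fun z => (z - a) * phi z :=
  ((integrable_pow_mul_phi 1).sub (integrable_phi.const_mul a)).congr
    (ae_of_all _ fun z => by simp only [Pi.sub_apply, pow_one]; ring)

theorem tendsto_pow_mul_phi_cocompact (n : ℕ) :
    Tendsto (fun x => x ^ n * phi x) (cocompact ℝ) (𝓝 0) := by
  simp_rw [phi_eq_mul_exp, mul_left_comm _ (√(2 * π))⁻¹]
  simpa using (tendsto_pow_mul_exp_neg_mul_sq_cocompact one_half_pos n).const_mul _

theorem tendsto_phi_atTop : Tendsto phi atTop (𝓝 0) := by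
  simpa using (tendsto_pow_mul_phi_cocompact 0).mono_left atTop_le_cocompact

theorem tendsto_phi_atBot : Tendsto phi atBot (𝓝 0) := by
  simpa using (tendsto_pow_mul_phi_cocompact 0).mono_left atBot_le_cocompact

theorem phi_cube_eq (x : ℝ) : phi x ^ 3 = (√(2 * π))⁻¹ ^ 3 * exp (-(3 / 2) * x ^ 2) := by
  rw [phi_eq_mul_exp, mul_pow, ← exp_nat_mul]
  ring_nf

theorem integrable_phi_cube : Integrable fun x => phi x ^ 3 := by
  simp_rw [phi_cube_eq]
  exact (integrable_exp_neg_mul_sq (by norm_num)).const_mul _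

theorem integral_phi_cube : ∫ x, phi x ^ 3 = √3 / (6 * π) := by
  simp_rw [phi_cube_eq]
  rw [integral_const_mul, integral_gaussian, show π / (3 / 2) = 2 * π / 3 by ring,
    sqrt_div' _ zero_le_three]
  have h2π : √(2 * π) ^ 2 = 2 * π := sq_sqrt (by positivity)
  have h3 : √3 ^ 2 = 3 := sq_sqrt zero_le_three
  have : 0 < √(2 * π) := by positivity
  field_simp
  linear_combination (-√3 ^ 2) * h2π - 2 * π * h3

noncomputable def Phi : ℝ → ℝ := cdf (gaussianReal 0 1)

theorem Phi_eq_integral (x : ℝ) : Phi x = ∫ t in Iic x, phi t := by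
  rw [Phi, cdf_eq_real, measureReal_def, gaussianReal_apply_eq_integral 0 one_ne_zero,
    ENNReal.toReal_ofReal
      (setIntegral_nonneg measurableSet_Iic fun t _ => gaussianPDFReal_nonneg 0 1 t),
    phi_eq_gaussianPDFReal]

theorem hasDerivAt_Phi (x : ℝ) : HasDerivAt Phi (phi x) x := by
  rw [funext Phi_eq_integral]
  exact hasDerivAt_integral_Iic continuous_phi integrable_phi x

@[fun_prop]
theorem continuous_Phi : Continuous Phi :=
  continuous_iff_continuousAt.mpr fun x => (hasDerivAt_Phi x).continuousAt

theorem tendsto_Phi_atTop : Tendsto Phi atTop (𝓝 1) := tendsto_cdf_atTop _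

theorem tendsto_Phi_atBot : Tendsto Phi atBot (𝓝 0) := tendsto_cdf_atBot _

theorem integral_Ioi_sub_mul_phi (a : ℝ) :
    ∫ z in Ioi a, (z - a) * phi z = phi a - a * (1 - Phi a) := by
  have hderiv (z : ℝ) (_ : z ∈ Ici a) :
      HasDerivAt (fun z => -phi z - a * Phi z) ((z - a) * phi z) z :=
    ((hasDerivAt_phi z).neg.sub ((hasDerivAt_Phi z).const_mul a)).congr_deriv (by ring)
  have hlim : Tendsto (fun z => -phi z - a * Phi z) atTop (𝓝 (-0 - a * 1)) :=
    tendsto_phi_atTop.neg.sub (tendsto_Phi_atTop.const_mul a)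
  rw [integral_Ioi_of_hasDerivAt_of_tendsto' hderiv (integrable_sub_mul_phi a).integrableOn hlim]
  ring

theorem integral_Iio_sub_mul_phi (a : ℝ) :
    ∫ y in Iio a, (a - y) * phi y = a * Phi a + phi a := by
  have hderiv (y : ℝ) (_ : y ∈ Iic a) :
      HasDerivAt (fun y => a * Phi y + phi y) ((a - y) * phi y) y :=
    (((hasDerivAt_Phi y).const_mul a).add (hasDerivAt_phi y)).congr_deriv (by ring)
  have hlim : Tendsto (fun y => a * Phi y + phi y) atBot (𝓝 (a * 0 + 0)) :=
    (tendsto_Phi_atBot.const_mul a).add tendsto_phi_atBot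
  have hint : IntegrableOn (fun y => (a - y) * phi y) (Iic a) := by
    refine ((integrable_sub_mul_phi a).neg.congr (ae_of_all _ fun y => ?_)).integrableOn
    simp only [Pi.neg_apply]
    ring
  rw [← integral_Iic_eq_integral_Iio, integral_Iic_of_hasDerivAt_of_tendsto' hderiv hint hlim]
  ring

noncomputable def reducedIntegrand (x : ℝ) : ℝ :=
  phi x * (x * Phi x + phi x) * (phi x - x * (1 - Phi x))

theorem integral_Iio_integral_Ioi (x : ℝ) :
    ∫ y in Iio x, ∫ z in Ioi x, (x - y) * (z - x) * phi z * phi y * phi x =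
      reducedIntegrand x := by
  calc ∫ y in Iio x, ∫ z in Ioi x, (x - y) * (z - x) * phi z * phi y * phi x
      = ∫ y in Iio x, (x - y) * phi y * phi x * ∫ z in Ioi x, (z - x) * phi z := by
        refine integral_congr_ae (ae_of_all _ fun y => ?_)
        dsimp only
        rw [← integral_const_mul]
        exact integral_congr_ae (ae_of_all _ fun z => by ring)
    _ = reducedIntegrand x := by
        rw [integral_mul_const, integral_mul_const, integral_Iio_sub_mul_phi,
          integral_Ioi_sub_mul_phi, reducedIntegrand]
        ring

theorem abs_reducedIntegrand_le (x : ℝ) :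
    |reducedIntegrand x| ≤ 2 * (x ^ 2 * phi x + phi x) := by
  have hφ0 := phi_nonneg x
  have hφ1 := phi_le_one x
  have hΦ0 : 0 ≤ Phi x := cdf_nonneg _ x
  have hΦ1 : Phi x ≤ 1 := cdf_le_one _ x
  have hlower : |x * Phi x + phi x| ≤ |x| + 1 :=
    calc |x * Phi x + phi x| ≤ |x| * Phi x + phi x := by
          simpa [abs_mul, abs_of_nonneg hΦ0, abs_of_nonneg hφ0]
            using abs_add_le (x * Phi x) (phi x)
      _ ≤ |x| + 1 := by nlinarith [abs_nonneg x]
  have hupper : |phi x - x * (1 - Phi x)| ≤ |x| + 1 :=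
    calc |phi x - x * (1 - Phi x)| ≤ phi x + |x| * (1 - Phi x) := by
          simpa [abs_mul, abs_of_nonneg hφ0, abs_of_nonneg (sub_nonneg.2 hΦ1)]
            using abs_sub (phi x) (x * (1 - Phi x))
      _ ≤ |x| + 1 := by nlinarith [abs_nonneg x]
  rw [reducedIntegrand, abs_mul, abs_mul, abs_of_nonneg hφ0]
  calc phi x * |x * Phi x + phi x| * |phi x - x * (1 - Phi x)|
      ≤ phi x * (|x| + 1) * (|x| + 1) := by gcongr
    _ ≤ 2 * (x ^ 2 * phi x + phi x) := by nlinarith [sq_abs x, sq_nonneg (|x| - 1)]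

theorem integrable_reducedIntegrand : Integrable reducedIntegrand :=
  (((integrable_pow_mul_phi 2).add integrable_phi).const_mul 2).mono'
    (by unfold reducedIntegrand; fun_prop : Continuous reducedIntegrand).aestronglyMeasurable
    (ae_of_all _ abs_reducedIntegrand_le)

noncomputable def reducedPrimitive (x : ℝ) : ℝ :=
  -2 * phi x ^ 2 * Phi x + x * phi x * Phi x - Phi x ^ 2 / 2 - x * phi x * Phi x ^ 2
    + Phi x ^ 3 / 3 + phi x ^ 2

theorem hasDerivAt_reducedPrimitive (x : ℝ) :
    HasDerivAt reducedPrimitive (reducedIntegrand x - 3 * phi x ^ 3) x := by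
  have hφ := hasDerivAt_phi x
  have hΦ := hasDerivAt_Phi x
  have hxφ := (hasDerivAt_id' x).mul hφ
  have h : HasDerivAt reducedPrimitive _ x :=
    (((((hφ.pow 2).const_mul (-2)).mul hΦ).add (hxφ.mul hΦ)).sub ((hΦ.pow 2).div_const 2)
      |>.sub (hxφ.mul (hΦ.pow 2))).add ((hΦ.pow 3).div_const 3) |>.add (hφ.pow 2)
  refine h.congr_deriv ?_
  simp only [Pi.mul_apply, Pi.pow_apply, reducedIntegrand]
  push_cast
  ring

theorem tendsto_reducedPrimitive {l : Filter ℝ} {c : ℝ} (hφ : Tendsto phi l (𝓝 0))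
    (hxφ : Tendsto (fun x => x * phi x) l (𝓝 0)) (hΦ : Tendsto Phi l (𝓝 c)) :
    Tendsto reducedPrimitive l (𝓝 (c ^ 3 / 3 - c ^ 2 / 2)) := by
  have h : Tendsto reducedPrimitive l _ :=
    (((((hφ.pow 2).const_mul (-2)).mul hΦ).add (hxφ.mul hΦ)).sub ((hΦ.pow 2).div_const 2)
      |>.sub (hxφ.mul (hΦ.pow 2))).add ((hΦ.pow 3).div_const 3) |>.add (hφ.pow 2)
  convert h using 2
  ring

theorem integral_reducedIntegrand :
    ∫ x, reducedIntegrand x = √3 / (2 * π) - 1 / 6 := by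
  have hbot := tendsto_reducedPrimitive tendsto_phi_atBot
    (by simpa using (tendsto_pow_mul_phi_cocompact 1).mono_left atBot_le_cocompact)
    tendsto_Phi_atBot
  have htop := tendsto_reducedPrimitive tendsto_phi_atTop
    (by simpa using (tendsto_pow_mul_phi_cocompact 1).mono_left atTop_le_cocompact)
    tendsto_Phi_atTop
  have hcube := integrable_phi_cube.const_mul 3
  have hdiff : ∫ x, (reducedIntegrand x - 3 * phi x ^ 3) = -1 / 6 := by
    rw [integral_of_hasDerivAt_of_tendsto hasDerivAt_reducedPrimitive
      (integrable_reducedIntegrand.sub hcube) hbot htop]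
    norm_num
  rw [integral_sub integrable_reducedIntegrand hcube, integral_const_mul, integral_phi_cube]
    at hdiff
  have : 0 < π := pi_pos
  field_simp at hdiff ⊢
  linarith

theorem stmt13 :
    (∫ x : ℝ, ∫ y in Set.Iio x, ∫ z in Set.Ioi x,
        (x - y) * (z - x) * phi z * phi y * phi x) =
      Real.sqrt 3 / (2 * Real.pi) - 1 / 6 := by
  simp_rw [integral_Iio_integral_Ioi]
  exact integral_reducedIntegrand
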